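/- For a valid CSR representation of a matrix A, the CSR matrix-vector product, defined row-wise by y(i) = Σ_{k = IA(i)}^{IA(i+1)-1} AA(k) * x(JA(k)), equals A·x. -/

import Mathlib

theorem Matrix.dotProduct_eq_sum_of_sparse {ι κ R : Type*} [Fintype ι]
    [NonUnitalNonAssocSemiring R] {r : ι → R} {s : Finset κ} {J : κ → ι} {a : κ → R}
    (hJ : Set.InjOn J s) (hval : ∀ k ∈ s, r (J k) = a k)
    (hzero : ∀ j, (∀ k ∈ s, J k ≠ j) → r j = 0) (x : ι → R) :
    r ⬝ᵥ x = ∑ k ∈ s, a k * x (J k) := by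
  refine (Finset.sum_of_injOn J hJ (fun k _ => Finset.mem_coe.2 (Finset.mem_univ (J k)))
    ?_ ?_).symm
  · intro j _ hj
    rw [hzero j fun k hk hkj => hj ⟨k, hk, hkj⟩, zero_mul]
  · intro k hk
    rw [hval k hk]

open Finset in
theorem csr_spmv_correct_general (n m nnz : ℕ)
    (A : Matrix (Fin n) (Fin m) ℝ)
    (AA : Fin nnz → ℝ) (JA : Fin nnz → Fin m) (IA : Fin (n + 1) → ℕ)
    (hval : ∀ (i : Fin n) (k : Fin nnz),
      IA i.castSucc ≤ k.1 → k.1 < IA i.succ → A i (JA k) = AA k)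
    (hinj : ∀ i : Fin n,
      Set.InjOn JA {k : Fin nnz | IA i.castSucc ≤ k.1 ∧ k.1 < IA i.succ})
    (hzero : ∀ (i : Fin n) (j : Fin m),
      (∀ k : Fin nnz, IA i.castSucc ≤ k.1 → k.1 < IA i.succ → JA k ≠ j) → A i j = 0)
    (x : Fin m → ℝ) :
    ∀ i : Fin n, A.mulVec x i =
      ∑ k ∈ univ.filter (fun k : Fin nnz => IA i.castSucc ≤ k.1 ∧ k.1 < IA i.succ),
        AA k * x (JA k) := by
  intro i
  refine Matrix.dotProduct_eq_sum_of_sparse (by simpa using hinj i) ?_ ?_ x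
  · intro k hk
    rw [mem_filter] at hk
    exact hval i k hk.2.1 hk.2.2
  · intro j hj
    exact hzero i j fun k hk1 hk2 => hj k (mem_filter.2 ⟨mem_univ k, hk1, hk2⟩)

open Finset in
theorem csr_spmv_correct (n m nnz : ℕ)
    (A : Matrix (Fin n) (Fin m) ℝ)
    (AA : Fin nnz → ℝ) (JA : Fin nnz → Fin m) (IA : Fin (n + 1) → ℕ)
    (hmono : Monotone IA) (h0 : IA 0 = 0) (hlast : IA (Fin.last n) = nnz)
    (hval : ∀ (i : Fin n) (k : Fin nnz),
      IA i.castSucc ≤ k.1 → k.1 < IA i.succ → A i (JA k) = AA k)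
    (hinj : ∀ i : Fin n,
      Set.InjOn JA {k : Fin nnz | IA i.castSucc ≤ k.1 ∧ k.1 < IA i.succ})
    (hzero : ∀ (i : Fin n) (j : Fin m),
      (∀ k : Fin nnz, IA i.castSucc ≤ k.1 → k.1 < IA i.succ → JA k ≠ j) → A i j = 0)
    (x : Fin m → ℝ) :
    ∀ i : Fin n, A.mulVec x i =
      ∑ k ∈ univ.filter (fun k : Fin nnz => IA i.castSucc ≤ k.1 ∧ k.1 < IA i.succ),
        AA k * x (JA k) :=
  csr_spmv_correct_general n m nnz A AA JA IA hval hinj hzero x
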